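/- Let (φₙ)_{n ≥ 1} be any family of order-n grid enumerations such that for every n, any two consecutive cells φₙ(j), φₙ(j+1) are king-adjacent, and the nesting condition holds: for all j < 4^{n+1}, integer division of both coordinates of φ_{n+1}(j) by 2 yields φₙ(⌊j/4⌋). Then every function f : [0,1] → ℝ² satisfying, for all n and all j < 4^n, f([j/4^n, (j+1)/4^n]) ⊆ S(n, φₙ(j)), obeys the Hölder condition of exponent 1/2: for all s, t ∈ [0,1], ‖f(t) − f(s)‖ ≤ 6·|t − s|^{1/2} (Euclidean norm on ℝ²). In particular every such curve has finite dilation factor sup_{t ≠ s} ‖f(t) − f(s)‖²/|t − s|, so locality is preserved in the Hölder sense for all HHC and HHCK curves. -/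

import Mathlib

/-! If `t - s ≤ 4⁻ⁿ`, then `s` and `t` lie in the same or in consecutive intervals of order `n`,
so `f s` and `f t` lie in equal or king-adjacent squares of side `2⁻ⁿ`, at distance at most
`2√2 · 2⁻ⁿ`. Choosing `n` with `4⁻ⁿ⁻¹ < t - s ≤ 4⁻ⁿ` gives `2⁻ⁿ ≤ 2√(t - s)`, and `4√2 ≤ 6`.
Gaps larger than `1/4` are handled at order 1, where any two cells are king-adjacent or equal. -/

/-- An order-`n` grid enumeration: a bijection between `Fin (4^n)` and the cells of the
`2^n × 2^n` grid; cell `(a,b)` represents the subsquare with lower-left corner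
`(a/2^n, b/2^n)`. -/
abbrev GridEnum (n : ℕ) := Fin (4 ^ n) ≃ Fin (2 ^ n) × Fin (2 ^ n)

/-- Two grid cells are edge-adjacent if their coordinates (as integers) satisfy
`|a − a'| + |b − b'| = 1`. -/
def edgeAdj {m : ℕ} (c d : Fin m × Fin m) : Prop :=
  |((c.1 : ℕ) : ℤ) - ((d.1 : ℕ) : ℤ)| + |((c.2 : ℕ) : ℤ) - ((d.2 : ℕ) : ℤ)| = 1

/-- Two grid cells are king-adjacent if their coordinates (as integers) satisfy
`max (|a − a'|) (|b − b'|) = 1`. -/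
def kingAdj {m : ℕ} (c d : Fin m × Fin m) : Prop :=
  max |((c.1 : ℕ) : ℤ) - ((d.1 : ℕ) : ℤ)| |((c.2 : ℕ) : ℤ) - ((d.2 : ℕ) : ℤ)| = 1

/-- Adjacency condition: any two consecutive cells of the enumeration are edge-adjacent. -/
def ConsecEdgeAdj {n : ℕ} (φ : GridEnum n) : Prop :=
  ∀ (j : ℕ) (h : j + 1 < 4 ^ n), edgeAdj (φ ⟨j, Nat.lt_of_succ_lt h⟩) (φ ⟨j + 1, h⟩)

/-- Any two consecutive cells of the enumeration are king-adjacent. -/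
def ConsecKingAdj {n : ℕ} (φ : GridEnum n) : Prop :=
  ∀ (j : ℕ) (h : j + 1 < 4 ^ n), kingAdj (φ ⟨j, Nat.lt_of_succ_lt h⟩) (φ ⟨j + 1, h⟩)

/-- Endpoint condition: the enumeration starts at the lower-left cell `(0,0)` and ends
at the lower-right cell `(2^n − 1, 0)`. -/
def EndpointCond {n : ℕ} (φ : GridEnum n) : Prop :=
  φ ⟨0, by positivity⟩ = (⟨0, by positivity⟩, ⟨0, by positivity⟩) ∧
  φ ⟨4 ^ n - 1, Nat.sub_lt (by positivity) Nat.one_pos⟩ =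
    (⟨2 ^ n - 1, Nat.sub_lt (by positivity) Nat.one_pos⟩, ⟨0, by positivity⟩)

/-- Nesting condition: integer division of both coordinates of `φₙ₊₁ j` by 2 yields
`φₙ ⌊j/4⌋`. -/
def Nests {n : ℕ} (φn : GridEnum n) (φn1 : GridEnum (n + 1)) : Prop :=
  ∀ j : Fin (4 ^ (n + 1)),
    ((φn1 j).1 : ℕ) / 2 =
      ((φn ⟨(j : ℕ) / 4, by
        have hj : (j : ℕ) < 4 ^ n * 4 := by simpa [pow_succ] using j.isLt
        omega⟩).1 : ℕ) ∧
    ((φn1 j).2 : ℕ) / 2 =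
      ((φn ⟨(j : ℕ) / 4, by
        have hj : (j : ℕ) < 4 ^ n * 4 := by simpa [pow_succ] using j.isLt
        omega⟩).2 : ℕ)

/-- The subsquare `[a/2^n, (a+1)/2^n] × [b/2^n, (b+1)/2^n]` in the Euclidean plane
associated to the grid cell `(a,b)` at order `n`. -/
def subSquare (n : ℕ) (c : Fin (2 ^ n) × Fin (2 ^ n)) : Set (EuclideanSpace ℝ (Fin 2)) :=
  {p | p 0 ∈ Set.Icc (((c.1 : ℕ) : ℝ) / 2 ^ n) ((((c.1 : ℕ) : ℝ) + 1) / 2 ^ n) ∧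
       p 1 ∈ Set.Icc (((c.2 : ℕ) : ℝ) / 2 ^ n) ((((c.2 : ℕ) : ℝ) + 1) / 2 ^ n)}

open Set

lemma EuclideanSpace.norm_le_sqrt_card_mul {ι : Type*} [Fintype ι] {v : EuclideanSpace ℝ ι}
    {r : ℝ} (hr : 0 ≤ r) (hv : ∀ i, |v i| ≤ r) : ‖v‖ ≤ √(Fintype.card ι) * r := by
  have hsum : ∑ i, ‖v i‖ ^ 2 ≤ Fintype.card ι * r ^ 2 :=
    calc ∑ i, ‖v i‖ ^ 2 ≤ ∑ _i : ι, r ^ 2 :=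
          Finset.sum_le_sum fun i _ => pow_le_pow_left₀ (norm_nonneg _) (hv i) 2
      _ = Fintype.card ι * r ^ 2 := by simp
  calc ‖v‖ = √(∑ i, ‖v i‖ ^ 2) := EuclideanSpace.norm_eq v
    _ ≤ √(Fintype.card ι * r ^ 2) := Real.sqrt_le_sqrt hsum
    _ = √(Fintype.card ι) * r := by rw [Real.sqrt_mul (Nat.cast_nonneg _), Real.sqrt_sq hr]

lemma abs_sub_le_of_mem_Icc_div {e a b x y : ℝ} (he : 0 < e) (hab : |a - b| ≤ 1)
    (hx : x ∈ Icc (a / e) ((a + 1) / e)) (hy : y ∈ Icc (b / e) ((b + 1) / e)) :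
    |x - y| ≤ 2 / e := by
  simp only [mem_Icc, div_le_iff₀ he, le_div_iff₀ he] at hx hy
  rw [abs_le] at hab
  rw [abs_sub_le_iff, le_div_iff₀ he, le_div_iff₀ he]
  constructor <;> nlinarith

lemma norm_sub_le_of_mem_subSquare {n : ℕ} {c d : Fin (2 ^ n) × Fin (2 ^ n)}
    {p q : EuclideanSpace ℝ (Fin 2)} (hp : p ∈ subSquare n c) (hq : q ∈ subSquare n d)
    (h₁ : |((c.1 : ℕ) : ℤ) - ((d.1 : ℕ) : ℤ)| ≤ 1) (h₂ : |((c.2 : ℕ) : ℤ) - ((d.2 : ℕ) : ℤ)| ≤ 1) :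
    ‖p - q‖ ≤ √2 * (2 / 2 ^ n) := by
  have he : (0 : ℝ) < 2 ^ n := by positivity
  have hcoord : ∀ i, |(p - q) i| ≤ 2 / 2 ^ n := by
    intro i
    fin_cases i
    · exact abs_sub_le_of_mem_Icc_div he (by simpa using (Int.cast_le (R := ℝ)).2 h₁) hp.1 hq.1
    · exact abs_sub_le_of_mem_Icc_div he (by simpa using (Int.cast_le (R := ℝ)).2 h₂) hp.2 hq.2
  simpa using EuclideanSpace.norm_le_sqrt_card_mul (by positivity) hcoord

lemma kingAdj.abs_sub_le_one {m : ℕ} {c d : Fin m × Fin m} (h : kingAdj c d) :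
    |((c.1 : ℕ) : ℤ) - ((d.1 : ℕ) : ℤ)| ≤ 1 ∧ |((c.2 : ℕ) : ℤ) - ((d.2 : ℕ) : ℤ)| ≤ 1 :=
  ⟨h ▸ le_max_left _ _, h ▸ le_max_right _ _⟩

noncomputable def cellIndex (N : ℕ) [NeZero N] (s : ℝ) : Fin N :=
  ⟨min ⌊s * N⌋₊ (N - 1), by have := NeZero.pos N; omega⟩

section cellIndex

variable {N : ℕ} [NeZero N]

lemma mem_Icc_cellIndex {s : ℝ} (hs : s ∈ Icc (0 : ℝ) 1) :
    s ∈ Icc ((cellIndex N s : ℕ) / (N : ℝ)) (((cellIndex N s : ℕ) + 1) / (N : ℝ)) := by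
  have hN : (0 : ℝ) < N := by exact_mod_cast NeZero.pos N
  rw [mem_Icc, div_le_iff₀ hN, le_div_iff₀ hN]
  simp only [cellIndex]
  refine ⟨?_, ?_⟩
  · calc ((min ⌊s * N⌋₊ (N - 1) : ℕ) : ℝ) ≤ ⌊s * N⌋₊ := by exact_mod_cast min_le_left _ _
      _ ≤ s * N := Nat.floor_le (by nlinarith [hs.1])
  · rcases le_total ⌊s * N⌋₊ (N - 1) with h | h
    · rw [min_eq_left h]
      exact (Nat.lt_floor_add_one _).le
    · rw [min_eq_right h, Nat.cast_sub (NeZero.one_le), Nat.cast_one, sub_add_cancel]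
      nlinarith [hs.2]

lemma cellIndex_mono {s t : ℝ} (hst : s ≤ t) : cellIndex N s ≤ cellIndex N t := by
  have : ⌊s * N⌋₊ ≤ ⌊t * N⌋₊ := Nat.floor_le_floor (by gcongr)
  simp only [cellIndex, Fin.mk_le_mk]
  omega

lemma cellIndex_le_succ {s t : ℝ} (hts : t - s ≤ 1 / N) :
    (cellIndex N t : ℕ) ≤ cellIndex N s + 1 := by
  have hN : (0 : ℝ) < N := by exact_mod_cast NeZero.pos N
  have htN : t * N ≤ s * N + 1 := by
    rw [le_div_iff₀ hN] at hts
    linarith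
  have hfloor : ⌊t * N⌋₊ < ⌊s * N⌋₊ + 2 := by
    rcases le_or_gt 0 (t * N) with h | h
    · rw [Nat.floor_lt h]
      push_cast
      linarith [Nat.lt_floor_add_one (s * N)]
    · rw [Nat.floor_of_nonpos h.le]
      omega
  simp only [cellIndex]
  omega

end cellIndex

def MapsIntervalsToCells {n : ℕ} (φ : GridEnum n) (f : ℝ → EuclideanSpace ℝ (Fin 2)) : Prop :=
  ∀ j : Fin (4 ^ n),
    f '' Icc (((j : ℕ) : ℝ) / 4 ^ n) ((((j : ℕ) : ℝ) + 1) / 4 ^ n) ⊆ subSquare n (φ j)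

section MapsIntervalsToCells

variable {n : ℕ} {φ : GridEnum n} {f : ℝ → EuclideanSpace ℝ (Fin 2)}

lemma MapsIntervalsToCells.mem_subSquare (hf : MapsIntervalsToCells φ f) {s : ℝ}
    (hs : s ∈ Icc (0 : ℝ) 1) : f s ∈ subSquare n (φ (cellIndex (4 ^ n) s)) :=
  hf _ (mem_image_of_mem f (by exact_mod_cast mem_Icc_cellIndex hs))

lemma MapsIntervalsToCells.norm_sub_le_of_sub_le (hadj : ConsecKingAdj φ)
    (hf : MapsIntervalsToCells φ f) {s t : ℝ} (hs : s ∈ Icc (0 : ℝ) 1) (ht : t ∈ Icc (0 : ℝ) 1)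
    (hst : s ≤ t) (hts : t - s ≤ 1 / 4 ^ n) : ‖f t - f s‖ ≤ √2 * (2 / 2 ^ n) := by
  have hfs := hf.mem_subSquare hs
  have hft := hf.mem_subSquare ht
  have hle : cellIndex (4 ^ n) s ≤ cellIndex (4 ^ n) t := cellIndex_mono hst
  have hij : (cellIndex (4 ^ n) t : ℕ) ≤ cellIndex (4 ^ n) s + 1 :=
    cellIndex_le_succ (by exact_mod_cast hts)
  generalize cellIndex (4 ^ n) s = i at hfs hle hij
  generalize cellIndex (4 ^ n) t = j at hft hle hij
  rcases hle.eq_or_lt with rfl | hlt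
  · exact norm_sub_le_of_mem_subSquare hft hfs (by simp) (by simp)
  · have hj : (j : ℕ) = i + 1 := by omega
    have hnext : j = ⟨i + 1, hj ▸ j.isLt⟩ := Fin.ext hj
    obtain ⟨h₁, h₂⟩ := (hadj i (hj ▸ j.isLt)).abs_sub_le_one
    rw [hnext] at hft
    exact norm_sub_le_of_mem_subSquare hft hfs (by rwa [abs_sub_comm]) (by rwa [abs_sub_comm])

end MapsIntervalsToCells

lemma MapsIntervalsToCells.norm_sub_le_sqrt_two {φ : GridEnum 1} {f : ℝ → EuclideanSpace ℝ (Fin 2)}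
    (hf : MapsIntervalsToCells φ f) {s t : ℝ} (hs : s ∈ Icc (0 : ℝ) 1) (ht : t ∈ Icc (0 : ℝ) 1) :
    ‖f t - f s‖ ≤ √2 := by
  have hcell : ∀ a b : Fin (2 ^ 1), |((a : ℕ) : ℤ) - ((b : ℕ) : ℤ)| ≤ 1 := by
    intro a b
    have := a.isLt
    have := b.isLt
    rw [abs_le]
    omega
  simpa using norm_sub_le_of_mem_subSquare (hf.mem_subSquare ht) (hf.mem_subSquare hs)
    (hcell _ _) (hcell _ _)

lemma exists_scale_of_le_quarter {d : ℝ} (hd : 0 < d) (hd' : d ≤ 1 / 4) :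
    ∃ n : ℕ, 1 ≤ n ∧ d ≤ 1 / 4 ^ n ∧ 1 / 2 ^ n ≤ 2 * √d := by
  obtain ⟨n, hlo, hhi⟩ := exists_nat_pow_near (x := 1 / d) (y := (4 : ℝ))
    (by rw [le_div_iff₀ hd]; linarith) (by norm_num)
  have hn : 1 ≤ n := by
    by_contra! h
    have : 4 ≤ 1 / d := by rw [le_div_iff₀ hd]; linarith
    interval_cases n
    norm_num at hlo hhi this
    linarith
  refine ⟨n, hn, ?_, ?_⟩
  · rwa [le_div_iff₀ (by positivity), mul_comm, ← le_div_iff₀ hd]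
  · have hsq : 1 / 2 ^ (n + 1) ≤ √d := by
      rw [Real.le_sqrt (by positivity) hd.le, div_pow, one_pow, ← pow_mul, pow_mul']
      rw [div_lt_iff₀ hd, mul_comm, ← div_lt_iff₀ (by positivity)] at hhi
      norm_num at hhi ⊢
      exact hhi.le
    rw [pow_succ] at hsq
    have : (1 : ℝ) / 2 ^ n = 2 * (1 / (2 ^ n * 2)) := by field_simp
    linarith

lemma norm_sub_le_six_mul_sqrt_of_le {φ : ∀ n : ℕ, GridEnum n} {f : ℝ → EuclideanSpace ℝ (Fin 2)}
    (hadj : ∀ n : ℕ, 1 ≤ n → ConsecKingAdj (φ n))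
    (hf : ∀ n : ℕ, 1 ≤ n → MapsIntervalsToCells (φ n) f) {s t : ℝ} (hs : s ∈ Icc (0 : ℝ) 1)
    (ht : t ∈ Icc (0 : ℝ) 1) (hst : s ≤ t) : ‖f t - f s‖ ≤ 6 * √(t - s) := by
  have hsqrt2 : √2 ≤ 3 / 2 := by
    rw [Real.sqrt_le_left (by norm_num)]
    norm_num
  rcases hst.eq_or_lt with rfl | hlt
  · simp
  rcases le_or_gt (t - s) (1 / 4) with hsmall | hlarge
  · obtain ⟨n, hn, hts, hscale⟩ := exists_scale_of_le_quarter (sub_pos.2 hlt) hsmall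
    calc ‖f t - f s‖ ≤ √2 * (2 / 2 ^ n) := (hf n hn).norm_sub_le_of_sub_le (hadj n hn) hs ht hst hts
      _ ≤ 3 / 2 * (2 * (2 * √(t - s))) := by
        rw [div_eq_mul_one_div]
        gcongr
      _ = 6 * √(t - s) := by ring
  · have : 1 / 2 ≤ √(t - s) := by
      rw [Real.le_sqrt (by norm_num) (by linarith)]
      linarith
    linarith [(hf 1 le_rfl).norm_sub_le_sqrt_two hs ht]

theorem nested_family_holder_general
    (φ : ∀ n : ℕ, GridEnum n)
    (hadj : ∀ n : ℕ, 1 ≤ n → ConsecKingAdj (φ n))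
    (f : ℝ → EuclideanSpace ℝ (Fin 2))
    (hf : ∀ n : ℕ, 1 ≤ n → ∀ j : Fin (4 ^ n),
      f '' Set.Icc (((j : ℕ) : ℝ) / 4 ^ n) ((((j : ℕ) : ℝ) + 1) / 4 ^ n) ⊆
        subSquare n (φ n j)) :
    ∀ s ∈ Set.Icc (0 : ℝ) 1, ∀ t ∈ Set.Icc (0 : ℝ) 1,
      ‖f t - f s‖ ≤ 6 * Real.sqrt |t - s| := by
  intro s hs t ht
  rcases le_total s t with h | h
  · rw [abs_of_nonneg (sub_nonneg.2 h)]
    exact norm_sub_le_six_mul_sqrt_of_le hadj hf hs ht h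
  · rw [norm_sub_rev, abs_sub_comm, abs_of_nonneg (sub_nonneg.2 h)]
    exact norm_sub_le_six_mul_sqrt_of_le hadj hf ht hs h

/-- Any function on `[0,1]` compatible with a nested king-adjacent family of grid
enumerations (carrying each subinterval `[j/4^n, (j+1)/4^n]` into the subsquare
`S(n, φₙ j)`) obeys the Hölder condition of exponent `1/2` with constant `6`
(Euclidean norm); in particular its dilation factor is finite, so locality is
preserved in the Hölder sense for all HHC and HHCK curves. -/
theorem nested_family_holder
    (φ : ∀ n : ℕ, GridEnum n)
    (hadj : ∀ n : ℕ, 1 ≤ n → ConsecKingAdj (φ n))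
    (hnest : ∀ n : ℕ, 1 ≤ n → Nests (φ n) (φ (n + 1)))
    (f : ℝ → EuclideanSpace ℝ (Fin 2))
    (hf : ∀ n : ℕ, 1 ≤ n → ∀ j : Fin (4 ^ n),
      f '' Set.Icc (((j : ℕ) : ℝ) / 4 ^ n) ((((j : ℕ) : ℝ) + 1) / 4 ^ n) ⊆
        subSquare n (φ n j)) :
    ∀ s ∈ Set.Icc (0 : ℝ) 1, ∀ t ∈ Set.Icc (0 : ℝ) 1,
      ‖f t - f s‖ ≤ 6 * Real.sqrt |t - s| :=
  nested_family_holder_general φ hadj f hf
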